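/- arXiv:1008.5182 — 6 statements merged into one kernel-verified Lean document; each statement's English description precedes it below -/
import Mathlib

section
/- Let b > 0, let j ≥ 1 be an integer, and let W : ℝ → ℝ be a bounded, measurable, non-decreasing function. Then the band function k ↦ E_j(k;W) is non-decreasing on ℝ. -/
open MeasureTheory Filter Set

/-- `Ej b W j k` is the `j`-th min-max value of the Schrödinger operator
`h(k) = -d²/dx² + (b x - k)² + W(x)` on `L²(ℝ)`:
the infimum over `j`-dimensional subspaces `V` of `C_c^∞(ℝ)` of the supremum of the
quadratic form over unit vectors of `V`. -/
noncomputable def Ej (b : ℝ) (W : ℝ → ℝ) (j : ℕ) (k : ℝ) : ℝ :=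
  sInf { E : ℝ | ∃ V : Submodule ℝ (ℝ → ℝ),
    (∀ u ∈ V, ContDiff ℝ (⊤ : ℕ∞) u ∧ HasCompactSupport u) ∧
    Module.finrank ℝ V = j ∧
    E = sSup { s : ℝ | ∃ u ∈ V, (∫ x : ℝ, (u x)^2) = 1 ∧
      s = ∫ x : ℝ, ((deriv u x)^2 + ((b * x - k)^2 + W x) * (u x)^2) } }

namespace BandAux

/-- The quadratic form of `h(k)`. -/
noncomputable def QF (b k : ℝ) (W : ℝ → ℝ) (u : ℝ → ℝ) : ℝ :=
  ∫ x : ℝ, ((deriv u x)^2 + ((b * x - k)^2 + W x) * (u x)^2)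

lemma QF_def (b k : ℝ) (W : ℝ → ℝ) (u : ℝ → ℝ) :
    QF b k W u = ∫ x : ℝ, ((deriv u x)^2 + ((b * x - k)^2 + W x) * (u x)^2) := rfl

/-- Translation by `t`, as a linear equivalence on functions. -/
noncomputable def shiftE (t : ℝ) : (ℝ → ℝ) ≃ₗ[ℝ] (ℝ → ℝ) where
  toFun u := fun x => u (x + t)
  invFun u := fun x => u (x - t)
  map_add' _ _ := rfl
  map_smul' _ _ := rfl
  left_inv u := funext fun x => by simp
  right_inv u := funext fun x => by simp

lemma shiftE_apply (t : ℝ) (u : ℝ → ℝ) : shiftE t u = fun x => u (x + t) := rfl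

lemma shiftE_lm_apply (t : ℝ) (u : ℝ → ℝ) :
    (shiftE t).toLinearMap u = fun x => u (x + t) := rfl

variable {u : ℝ → ℝ}

lemma hcs_sq (hus : HasCompactSupport u) : HasCompactSupport (fun x => (u x)^2) := by
  have h : (fun x => (u x)^2) = u * u := by funext x; simp [pow_two]
  rw [h]; exact hus.mul_right

lemma int_sq (hu : ContDiff ℝ (⊤ : ℕ∞) u) (hus : HasCompactSupport u) :
    Integrable (fun x : ℝ => (u x)^2) :=
  (hu.continuous.pow 2).integrable_of_hasCompactSupport (hcs_sq hus)

lemma int_d (hu : ContDiff ℝ (⊤ : ℕ∞) u) (hus : HasCompactSupport u) :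
    Integrable (fun x : ℝ => (deriv u x)^2) := by
  have hd : Continuous (deriv u) := hu.continuous_deriv (by simp)
  have h : (fun x : ℝ => (deriv u x)^2) = deriv u * deriv u := by funext x; simp [pow_two]
  refine (hd.pow 2).integrable_of_hasCompactSupport ?_
  rw [pow_two]; exact hus.deriv.mul_right

lemma int_q (b k : ℝ) (hu : ContDiff ℝ (⊤ : ℕ∞) u) (hus : HasCompactSupport u) :
    Integrable (fun x : ℝ => (b * x - k)^2 * (u x)^2) := by
  have hc : Continuous fun x : ℝ => (b * x - k)^2 * (u x)^2 :=
    (((continuous_const.mul continuous_id).sub continuous_const).pow 2).mul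
      (hu.continuous.pow 2)
  refine hc.integrable_of_hasCompactSupport ?_
  have h : (fun x : ℝ => (b * x - k)^2 * (u x)^2)
      = (fun x : ℝ => (b * x - k)^2) * (fun x => (u x)^2) := rfl
  rw [h]; exact (hcs_sq hus).mul_left

lemma int_w {W : ℝ → ℝ} (hWmeas : Measurable W) {C : ℝ} (hC : ∀ x, |W x| ≤ C)
    (hu : ContDiff ℝ (⊤ : ℕ∞) u) (hus : HasCompactSupport u) :
    Integrable (fun x : ℝ => W x * (u x)^2) :=
  (int_sq hu hus).bdd_mul hWmeas.aestronglyMeasurable (c := C) (ae_of_all _ fun x => by simpa using hC x)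

lemma int_form {W : ℝ → ℝ} (hWmeas : Measurable W) {C : ℝ} (hC : ∀ x, |W x| ≤ C)
    (b k : ℝ) (hu : ContDiff ℝ (⊤ : ℕ∞) u) (hus : HasCompactSupport u) :
    Integrable (fun x : ℝ => (deriv u x)^2 + ((b * x - k)^2 + W x) * (u x)^2) := by
  have h : (fun x : ℝ => (deriv u x)^2 + ((b * x - k)^2 + W x) * (u x)^2)
      = fun x => ((deriv u x)^2 + (b * x - k)^2 * (u x)^2) + W x * (u x)^2 := by
    funext x; ring
  rw [h]
  exact ((int_d hu hus).add (int_q b k hu hus)).add (int_w hWmeas hC hu hus)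

lemma QF_lower {W : ℝ → ℝ} (hWmeas : Measurable W) {C : ℝ} (hC : ∀ x, |W x| ≤ C)
    (b k : ℝ) (hu : ContDiff ℝ (⊤ : ℕ∞) u) (hus : HasCompactSupport u)
    (hnorm : (∫ x : ℝ, (u x)^2) = 1) :
    -C ≤ QF b k W u := by
  have hsplit : QF b k W u = (∫ x : ℝ, ((deriv u x)^2 + (b * x - k)^2 * (u x)^2))
      + ∫ x : ℝ, W x * (u x)^2 := by
    have e1 : Integrable (fun x : ℝ => (deriv u x)^2 + (b * x - k)^2 * (u x)^2) :=
      (int_d hu hus).add (int_q b k hu hus)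
    rw [QF_def, ← integral_add e1 (int_w hWmeas hC hu hus)]
    congr 1; funext x; ring
  rw [hsplit]
  have h1 : 0 ≤ ∫ x : ℝ, ((deriv u x)^2 + (b * x - k)^2 * (u x)^2) :=
    integral_nonneg fun x => by positivity
  have h2 : (-C : ℝ) ≤ ∫ x : ℝ, W x * (u x)^2 := by
    have hle : (∫ x : ℝ, (-C) * (u x)^2) ≤ ∫ x : ℝ, W x * (u x)^2 := by
      refine integral_mono ((int_sq hu hus).const_mul _) (int_w hWmeas hC hu hus) fun x => ?_
      have h := (abs_le.mp (hC x)).1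
      nlinarith [sq_nonneg (u x)]
    calc (-C : ℝ) = ∫ x : ℝ, (-C) * (u x)^2 := by rw [integral_const_mul, hnorm, mul_one]
      _ ≤ _ := hle
  linarith

/-- lower bound for the elements of the min-max set -/
lemma sSup_lower {b : ℝ} {W : ℝ → ℝ} (hWmeas : Measurable W) {C : ℝ} (hC : ∀ x, |W x| ≤ C)
    (hC0 : 0 ≤ C) (κ : ℝ) (V : Submodule ℝ (ℝ → ℝ))
    (hV : ∀ u ∈ V, ContDiff ℝ (⊤ : ℕ∞) u ∧ HasCompactSupport u) :
    -C ≤ sSup { s : ℝ | ∃ u ∈ V, (∫ x : ℝ, (u x)^2) = 1 ∧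
      s = ∫ x : ℝ, ((deriv u x)^2 + ((b * x - κ)^2 + W x) * (u x)^2) } := by
  set A := { s : ℝ | ∃ u ∈ V, (∫ x : ℝ, (u x)^2) = 1 ∧
      s = ∫ x : ℝ, ((deriv u x)^2 + ((b * x - κ)^2 + W x) * (u x)^2) } with hA
  by_cases hAne : A.Nonempty
  · by_cases hbd : BddAbove A
    · obtain ⟨s, hs⟩ := hAne
      refine le_trans ?_ (le_csSup hbd hs)
      obtain ⟨v, hvV, hnorm, rfl⟩ := hs
      exact QF_lower hWmeas hC b κ (hV v hvV).1 (hV v hvV).2 hnorm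
    · rw [Real.sSup_of_not_bddAbove hbd]; linarith
  · rw [not_nonempty_iff_eq_empty] at hAne
    rw [hAne, Real.sSup_empty]; linarith

/-- Change of variables: the form of the shifted function. -/
lemma QF_shift {W : ℝ → ℝ} {b k k' t : ℝ} (hbt : b * t = k' - k) (u : ℝ → ℝ) :
    QF b k W (fun x => u (x + t))
      = ∫ x : ℝ, ((deriv u x)^2 + ((b * x - k')^2 + W (x - t)) * (u x)^2) := by
  set G : ℝ → ℝ := fun y => (deriv u y)^2 + ((b * y - k')^2 + W (y - t)) * (u y)^2 with hG
  have h : QF b k W (fun x => u (x + t)) = ∫ x : ℝ, G (x + t) := by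
    rw [QF_def]
    congr 1
    funext x
    have h1 : deriv (fun y => u (y + t)) x = deriv u (x + t) := deriv_comp_add_const u t x
    have h2 : b * (x + t) - k' = b * x - k := by
      rw [mul_add, hbt]; ring
    have h3 : (x + t) - t = x := add_sub_cancel_right x t
    rw [hG]
    simp only [h2, h3]
    rw [h1]
  rw [h]
  exact integral_add_right_eq_self G t

lemma norm_shift (t : ℝ) (u : ℝ → ℝ) :
    (∫ x : ℝ, (u (x + t))^2) = ∫ x : ℝ, (u x)^2 :=
  integral_add_right_eq_self (fun x => (u x)^2) t

/-- key comparison: translated form at `k` vs form at `k'`. -/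
lemma QF_compare {W : ℝ → ℝ} (hWmeas : Measurable W) {C : ℝ} (hC : ∀ x, |W x| ≤ C)
    (hWmono : Monotone W) {b k k' t : ℝ} (ht0 : 0 ≤ t) (hbt : b * t = k' - k)
    (hu : ContDiff ℝ (⊤ : ℕ∞) u) (hus : HasCompactSupport u)
    (hnorm : (∫ x : ℝ, (u x)^2) = 1) :
    QF b k W (fun x => u (x + t)) ≤ QF b k' W u ∧
      QF b k' W u ≤ QF b k W (fun x => u (x + t)) + 2 * C := by
  have hW't : Measurable (fun y : ℝ => W (y - t)) := hWmeas.comp (measurable_id.sub_const t)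
  have hC' : ∀ x : ℝ, |(fun y : ℝ => W (y - t)) x| ≤ C := fun x => hC (x - t)
  have hGint : Integrable (fun x : ℝ =>
      (deriv u x)^2 + ((b * x - k')^2 + (fun y : ℝ => W (y - t)) x) * (u x)^2) :=
    int_form hW't hC' b k' hu hus
  have hFint : Integrable (fun x : ℝ =>
      (deriv u x)^2 + ((b * x - k')^2 + W x) * (u x)^2) :=
    int_form hWmeas hC b k' hu hus
  have hshift := QF_shift (W := W) hbt u
  constructor
  · rw [hshift, QF_def]
    refine integral_mono hGint hFint fun x => ?_
    have hmono : W (x - t) ≤ W x := hWmono (by linarith)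
    have := sq_nonneg (u x)
    nlinarith
  · rw [hshift, QF_def]
    have hdiff : (∫ x : ℝ, ((deriv u x)^2 + ((b * x - k')^2 + W x) * (u x)^2))
        - (∫ x : ℝ, ((deriv u x)^2 + ((b * x - k')^2 + W (x - t)) * (u x)^2))
        = ∫ x : ℝ, (W x - W (x - t)) * (u x)^2 := by
      rw [← integral_sub hFint hGint]
      congr 1; funext x; ring
    have hble : (∫ x : ℝ, (W x - W (x - t)) * (u x)^2) ≤ 2 * C := by
      have h1 : (∫ x : ℝ, (W x - W (x - t)) * (u x)^2)
          ≤ ∫ x : ℝ, (2 * C) * (u x)^2 := by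
        have hdint : Integrable (fun x : ℝ => (W x - W (x - t)) * (u x)^2) := by
          have heq : (fun x : ℝ => (W x - W (x - t)) * (u x)^2)
              = fun x : ℝ => W x * (u x)^2 - W (x - t) * (u x)^2 := by funext x; ring
          rw [heq]
          exact (int_w hWmeas hC hu hus).sub (int_w hW't hC' hu hus)
        refine integral_mono hdint ((int_sq hu hus).const_mul _) fun x => ?_
        have h2 := abs_le.mp (hC x)
        have h3 := abs_le.mp (hC (x - t))
        nlinarith [sq_nonneg (u x)]
      rwa [integral_const_mul, hnorm, mul_one] at h1
    linarith

end BandAux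

open BandAux

/-- If `W` is bounded, measurable and non-decreasing, then the band function
`k ↦ E_j(k;W)` is non-decreasing. -/
theorem band_function_monotone (b : ℝ) (hb : 0 < b) (j : ℕ) (hj : 1 ≤ j) (W : ℝ → ℝ)
    (hWmeas : Measurable W) (hWbdd : ∃ C : ℝ, ∀ x, |W x| ≤ C) (hWmono : Monotone W) :
    Monotone (fun k => Ej b W j k) := by
  intro k k' hkk'
  simp only
  obtain ⟨C, hC⟩ := hWbdd
  have hC0 : (0 : ℝ) ≤ C := (abs_nonneg _).trans (hC 0)
  set t : ℝ := (k' - k) / b with htdef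
  have ht0 : 0 ≤ t := div_nonneg (by linarith) hb.le
  have hbt : b * t = k' - k := by
    rw [htdef]; field_simp
  unfold Ej
  by_cases hne : { E : ℝ | ∃ V : Submodule ℝ (ℝ → ℝ),
      (∀ u ∈ V, ContDiff ℝ (⊤ : ℕ∞) u ∧ HasCompactSupport u) ∧
      Module.finrank ℝ V = j ∧
      E = sSup { s : ℝ | ∃ u ∈ V, (∫ x : ℝ, (u x)^2) = 1 ∧
        s = ∫ x : ℝ, ((deriv u x)^2 + ((b * x - k')^2 + W x) * (u x)^2) } }.Nonempty
  · refine le_csInf hne ?_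
    rintro E' ⟨V, hVsm, hVrk, rfl⟩
    set V' : Submodule ℝ (ℝ → ℝ) := V.map (shiftE t).toLinearMap with hV'
    have hVsm' : ∀ w ∈ V', ContDiff ℝ (⊤ : ℕ∞) w ∧ HasCompactSupport w := by
      rintro w hw
      obtain ⟨v, hvV, rfl⟩ := Submodule.mem_map.mp hw
      obtain ⟨h1, h2⟩ := hVsm v hvV
      rw [shiftE_lm_apply]
      exact ⟨h1.comp (contDiff_id.add contDiff_const),
        h2.comp_homeomorph (Homeomorph.addRight t)⟩
    have hrk' : Module.finrank ℝ V' = j := by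
      rw [hV', LinearEquiv.finrank_map_eq]; exact hVrk
    have hmem : sSup { s : ℝ | ∃ w ∈ V', (∫ x : ℝ, (w x)^2) = 1 ∧
        s = ∫ x : ℝ, ((deriv w x)^2 + ((b * x - k)^2 + W x) * (w x)^2) }
        ∈ { E : ℝ | ∃ V : Submodule ℝ (ℝ → ℝ),
          (∀ u ∈ V, ContDiff ℝ (⊤ : ℕ∞) u ∧ HasCompactSupport u) ∧
          Module.finrank ℝ V = j ∧
          E = sSup { s : ℝ | ∃ u ∈ V, (∫ x : ℝ, (u x)^2) = 1 ∧
            s = ∫ x : ℝ, ((deriv u x)^2 + ((b * x - k)^2 + W x) * (u x)^2) } } :=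
      ⟨V', hVsm', hrk', rfl⟩
    refine le_trans (csInf_le ?_ hmem) ?_
    · refine ⟨-C, ?_⟩
      rintro E ⟨V₀, hV₀, -, rfl⟩
      exact sSup_lower hWmeas hC hC0 k V₀ hV₀
    · -- sSup comparison
      set A := { s : ℝ | ∃ w ∈ V', (∫ x : ℝ, (w x)^2) = 1 ∧
        s = ∫ x : ℝ, ((deriv w x)^2 + ((b * x - k)^2 + W x) * (w x)^2) } with hAdef
      set B := { s : ℝ | ∃ u ∈ V, (∫ x : ℝ, (u x)^2) = 1 ∧
        s = ∫ x : ℝ, ((deriv u x)^2 + ((b * x - k')^2 + W x) * (u x)^2) } with hBdef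
      -- forward: every element of B produces a comparable element of A
      have hBA : ∀ s' ∈ B, ∃ s ∈ A, s ≤ s' ∧ s' ≤ s + 2 * C := by
        rintro s' ⟨v, hvV, hnorm, rfl⟩
        obtain ⟨h1, h2⟩ := hVsm v hvV
        obtain ⟨hle, hge⟩ := QF_compare hWmeas hC hWmono ht0 hbt h1 h2 hnorm
        refine ⟨QF b k W (fun x => v (x + t)), ?_, ?_, ?_⟩
        · refine ⟨fun x => v (x + t), ?_, ?_, rfl⟩
          · exact Submodule.mem_map_of_mem hvV
          · rw [norm_shift t v]; exact hnorm
        · exact hle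
        · exact hge
      -- backward: every element of A is dominated by an element of B
      have hAB : ∀ s ∈ A, ∃ s' ∈ B, s ≤ s' := by
        rintro s ⟨w, hwV', hnorm, rfl⟩
        obtain ⟨v, hvV, rfl⟩ := Submodule.mem_map.mp hwV'
        obtain ⟨h1, h2⟩ := hVsm v hvV
        have hnorm' : (∫ x : ℝ, (v x)^2) = 1 := by
          rw [← norm_shift t v]; exact hnorm
        obtain ⟨hle, -⟩ := QF_compare hWmeas hC hWmono ht0 hbt h1 h2 hnorm'
        exact ⟨QF b k' W v, ⟨v, hvV, hnorm', rfl⟩, hle⟩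
      by_cases hBne : B.Nonempty
      · by_cases hBbd : BddAbove B
        · have hAne : A.Nonempty := by
            obtain ⟨s', hs'⟩ := hBne
            obtain ⟨s, hsA, -, -⟩ := hBA s' hs'
            exact ⟨s, hsA⟩
          refine csSup_le hAne fun s hs => ?_
          obtain ⟨s', hs'B, hle⟩ := hAB s hs
          exact hle.trans (le_csSup hBbd hs'B)
        · have hAbd : ¬ BddAbove A := by
            rintro ⟨M, hM⟩
            refine hBbd ⟨M + 2 * C, ?_⟩
            rintro s' hs'
            obtain ⟨s, hsA, -, hge⟩ := hBA s' hs'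
            have := hM hsA
            linarith
          rw [Real.sSup_of_not_bddAbove hAbd, Real.sSup_of_not_bddAbove hBbd]
      · have hAe : A = ∅ := by
          rw [eq_empty_iff_forall_notMem]
          intro s hs
          obtain ⟨s', hs'B, -⟩ := hAB s hs
          exact hBne ⟨s', hs'B⟩
        rw [hAe, not_nonempty_iff_eq_empty.mp hBne]
  · have hne2 : ¬ { E : ℝ | ∃ V : Submodule ℝ (ℝ → ℝ),
        (∀ u ∈ V, ContDiff ℝ (⊤ : ℕ∞) u ∧ HasCompactSupport u) ∧
        Module.finrank ℝ V = j ∧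
        E = sSup { s : ℝ | ∃ u ∈ V, (∫ x : ℝ, (u x)^2) = 1 ∧
          s = ∫ x : ℝ, ((deriv u x)^2 + ((b * x - k)^2 + W x) * (u x)^2) } }.Nonempty := by
      rintro ⟨E, V, hVsm, hVrk, rfl⟩
      exact hne ⟨sSup { s : ℝ | ∃ u ∈ V, (∫ x : ℝ, (u x)^2) = 1 ∧
        s = ∫ x : ℝ, ((deriv u x)^2 + ((b * x - k')^2 + W x) * (u x)^2) },
        V, hVsm, hVrk, rfl⟩
    rw [not_nonempty_iff_eq_empty.mp hne, not_nonempty_iff_eq_empty.mp hne2, Real.sInf_empty]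
end

section
/- Let b > 0, let j ≥ 1 be an integer, let w_− < w_+ be real numbers, let x_0 ∈ ℝ, and let w : ℝ → ℝ be the step function w(x) := w_+ for x ≥ x_0 and w(x) := w_− for x < x_0. Then Φ_j(k;w)² = ((w_+ − w_−)/2) p_j k^{2j−3} e^{−(b^{−1/2}k − b^{1/2}x_0)²} (1 + o(1)) as k → +∞, i.e. the quotient of the left-hand side by ((w_+ − w_−)/2) p_j k^{2j−3} e^{−(b^{−1/2}k − b^{1/2}x_0)²} tends to 1. -/
open MeasureTheory Filter Set

/-- The (physicists') Hermite polynomial `H_q(x) = (-1)^q e^{x²} (d/dx)^q e^{-x²}`. -/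
noncomputable def hermiteH (q : ℕ) (x : ℝ) : ℝ :=
  (-1)^q * Real.exp (x^2) * iteratedDeriv q (fun y => Real.exp (-(y^2))) x

/-- The normalized Hermite function `φ_j(x) = H_{j-1}(x) e^{-x²/2} / (√π 2^{j-1} (j-1)!)^{1/2}`. -/
noncomputable def hermFun (j : ℕ) (x : ℝ) : ℝ :=
  hermiteH (j-1) x * Real.exp (-(x^2)/2) /
    Real.sqrt (Real.sqrt Real.pi * 2^(j-1) * (j-1).factorial)

/-- `p_j = 2^{j-1} b^{3/2-j} / (√π (j-1)!)`. -/
noncomputable def pj (b : ℝ) (j : ℕ) : ℝ :=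
  2^(j-1) * b ^ ((3:ℝ)/2 - (j:ℝ)) / (Real.sqrt Real.pi * (j-1).factorial)

/-- `Φ_j(k;W)² = ∫ (W₊ - W(x + k/b)) b^{1/2} φ_j(b^{1/2} x)² dx`, with `Wp` the limit of `W` at `+∞`. -/
noncomputable def Phi (b : ℝ) (W : ℝ → ℝ) (Wp : ℝ) (j : ℕ) (k : ℝ) : ℝ :=
  Real.sqrt (∫ x : ℝ, (Wp - W (x + k / b)) * Real.sqrt b * (hermFun j (Real.sqrt b * x))^2)

/-! After the substitution `t = -√b x`, `Φ_j(k;w)²` is `(w₊ - w₋)` times the Gaussian tail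
`∫_K^∞ φ_j(-t)² dt` with `K = k/√b - √b x₀`, and `φ_j(-t)² = P(t) e^{-t²}` for a polynomial `P` of
degree `2(j-1)` and leading coefficient `2^{j-1}/(√π (j-1)!)`. L'Hôpital's rule gives
`∫_K^∞ P(t) e^{-t²} dt ~ (lc P / 2) K^{deg P - 1} e^{-K²}`; since `K ~ k/√b`, the power
`K^{2j-3}` may be replaced by `(k/√b)^{2j-3}`, and this produces `p_j k^{2j-3}`. -/

open Asymptotics Polynomial Topology

lemma hasDerivAt_integral_Ioi {h : ℝ → ℝ} (hint : Integrable h) (hcont : Continuous h) (K : ℝ) :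
    HasDerivAt (fun K => ∫ t in Ioi K, h t) (-h K) K := by
  have hsplit : (fun K => ∫ t in Ioi K, h t) =
      fun K => (∫ t in Ioi 0, h t) - ∫ t in 0..K, h t := by
    funext K
    rw [← intervalIntegral.integral_Ioi_sub_Ioi' hint.integrableOn hint.integrableOn,
      sub_sub_cancel]
  rw [hsplit]
  exact ((hcont.integral_hasStrictDerivAt 0 K).hasDerivAt).const_sub _

lemma hasDerivAt_rpow_mul_exp_neg_sq (r : ℝ) {K : ℝ} (hK : 0 < K) :
    HasDerivAt (fun x => x ^ r * Real.exp (-x ^ 2))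
      ((r * K ^ (r - 1) - 2 * K ^ (r + 1)) * Real.exp (-K ^ 2)) K := by
  have hexp : HasDerivAt (fun x : ℝ => Real.exp (-x ^ 2)) (Real.exp (-K ^ 2) * -(2 * K)) K := by
    simpa using ((hasDerivAt_pow 2 K).neg).exp
  refine ((Real.hasDerivAt_rpow_const (p := r) (Or.inl hK.ne')).mul hexp).congr_deriv ?_
  rw [Real.rpow_add_one hK.ne']
  ring

lemma tendsto_rpow_mul_exp_neg_sq_atTop_nhds_zero (r : ℝ) :
    Tendsto (fun x : ℝ => x ^ r * Real.exp (-x ^ 2)) atTop (𝓝 0) := by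
  have h := (rpow_mul_exp_neg_mul_sq_isLittleO_exp_neg one_pos r).trans_tendsto
    (Real.tendsto_exp_atBot.comp (tendsto_id.const_mul_atTop_of_neg (by norm_num)))
  simpa using h

lemma rpow_mul_exp_neg_sq_deriv_isEquivalent (r : ℝ) :
    (fun K : ℝ => (r * K ^ (r - 1) - 2 * K ^ (r + 1)) * Real.exp (-K ^ 2)) ~[atTop]
      fun K => -2 * K ^ (r + 1) * Real.exp (-K ^ 2) := by
  refine isEquivalent_of_tendsto_one ?_
  have hlim : Tendsto (fun K : ℝ => 1 - r / 2 * (K ^ 2)⁻¹) atTop (𝓝 1) := by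
    simpa using ((tendsto_pow_atTop two_ne_zero).inv_tendsto_atTop.const_mul (r / 2)).const_sub 1
  refine hlim.congr' ?_
  filter_upwards [eventually_gt_atTop 0] with K hK
  have hpow : K ^ (r - 1) = K ^ (r + 1) * (K ^ 2)⁻¹ := by
    rw [← Real.rpow_natCast, ← Real.rpow_neg hK.le, ← Real.rpow_add hK]
    norm_num
    ring_nf
  have : 0 < K ^ (r + 1) := Real.rpow_pos_of_pos hK _
  simp only [Pi.div_apply, hpow]
  field_simp
  ring

lemma integral_Ioi_isEquivalent_of_gaussian {h : ℝ → ℝ} (hint : Integrable h)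
    (hcont : Continuous h) {r c : ℝ} (hc : c ≠ 0)
    (hh : h ~[atTop] fun K => c * K ^ (r + 1) * Real.exp (-K ^ 2)) :
    (fun K => ∫ t in Ioi K, h t) ~[atTop] fun K => c / 2 * K ^ r * Real.exp (-K ^ 2) := by
  set v : ℝ → ℝ := fun K => -(c * K ^ (r + 1) * Real.exp (-K ^ 2))
  set g' : ℝ → ℝ := fun K => c / 2 * ((r * K ^ (r - 1) - 2 * K ^ (r + 1)) * Real.exp (-K ^ 2))
  have hg'v : g' ~[atTop] v := by
    refine ((IsEquivalent.refl (u := fun _ => c / 2)).mul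
      (rpow_mul_exp_neg_sq_deriv_isEquivalent r)).congr_right (Eventually.of_forall fun K => ?_)
    simp only [v, Pi.mul_apply]
    ring
  have hv : ∀ᶠ K in atTop, v K ≠ 0 := by
    filter_upwards [eventually_gt_atTop 0] with K hK
    simp only [v, neg_ne_zero]
    have := Real.rpow_pos_of_pos hK (r + 1)
    positivity
  have hg' : ∀ᶠ K in atTop, g' K ≠ 0 := by
    filter_upwards [hg'v.isTheta.eq_zero_iff, hv] with K hiff hK
    exact fun h0 => hK (hiff.1 h0)
  have hdiv : Tendsto (fun K => -h K / g' K) atTop (𝓝 1) :=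
    (isEquivalent_iff_tendsto_one hg').1 (hh.neg.trans hg'v.symm)
  have hderiv : ∀ᶠ K in atTop,
      HasDerivAt (fun x => c / 2 * (x ^ r * Real.exp (-x ^ 2))) (g' K) K := by
    filter_upwards [eventually_gt_atTop 0] with K hK
    exact (hasDerivAt_rpow_mul_exp_neg_sq r hK).const_mul _
  refine isEquivalent_of_tendsto_one ?_
  have := HasDerivAt.lhopital_zero_atTop
    (Eventually.of_forall (hasDerivAt_integral_Ioi hint hcont)) hderiv hg'
    (tendsto_integral_Ioi_zero tendsto_id)
    (by simpa using (tendsto_rpow_mul_exp_neg_sq_atTop_nhds_zero r).const_mul (c / 2)) hdiv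
  simpa only [mul_assoc, Pi.div_def] using this

lemma Asymptotics.IsEquivalent.rpow_of_eventually_nonneg {α : Type*} {l : Filter α} {u v : α → ℝ}
    (hv : ∀ᶠ x in l, 0 ≤ v x) (h : u ~[l] v) (r : ℝ) :
    (fun x => u x ^ r) ~[l] fun x => v x ^ r := by
  have hmax : v =ᶠ[l] fun x => max (v x) 0 := hv.mono fun x hx => (max_eq_left hx).symm
  exact ((h.congr_right hmax).rpow (fun x => le_max_right _ _)).congr_right
    (hmax.symm.fun_comp (· ^ r))

lemma integrable_eval_mul_exp_neg_sq (P : ℝ[X]) :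
    Integrable fun t : ℝ => P.eval t * Real.exp (-t ^ 2) := by
  induction P using Polynomial.induction_on' with
  | add p q hp hq =>
    simp only [eval_add, add_mul]
    exact hp.add hq
  | monomial n a =>
    have h := integrable_rpow_mul_exp_neg_mul_sq one_pos (s := n)
      (by linarith [n.cast_nonneg (α := ℝ)])
    simpa only [eval_monomial, Real.rpow_natCast, one_mul, neg_mul, mul_assoc] using h.const_mul a

lemma integral_Ioi_eval_mul_exp_neg_sq_isEquivalent {P : ℝ[X]} (hP : P ≠ 0) :
    (fun K => ∫ t in Ioi K, P.eval t * Real.exp (-t ^ 2)) ~[atTop]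
      fun K => P.leadingCoeff / 2 * K ^ ((P.natDegree : ℝ) - 1) * Real.exp (-K ^ 2) := by
  refine integral_Ioi_isEquivalent_of_gaussian (integrable_eval_mul_exp_neg_sq P)
    (P.continuous.mul (continuous_pow 2).neg.rexp) (leadingCoeff_ne_zero.2 hP) ?_
  refine (P.isEquivalent_atTop_lead.mul IsEquivalent.refl).congr_right
    (Eventually.of_forall fun K => ?_)
  simp [Real.rpow_natCast]

lemma hermiteH_eq_aeval (q : ℕ) (x : ℝ) :
    hermiteH q x = √2 ^ q * aeval (√2 * x) (hermite q) := by
  have h2 : √2 ^ 2 = 2 := Real.sq_sqrt zero_le_two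
  have hgauss : (fun y : ℝ => Real.exp (-y ^ 2)) = fun y => Real.exp (-((√2 * y) ^ 2 / 2)) := by
    funext y
    rw [mul_pow, h2]
    ring_nf
  have hsmooth : ContDiff ℝ q fun u : ℝ => Real.exp (-(u ^ 2 / 2)) := by fun_prop
  rw [hermiteH, hgauss, iteratedDeriv_comp_const_mul hsmooth]
  beta_reduce
  rw [iteratedDeriv_eq_iterate, deriv_gaussian_eq_hermite_mul_gaussian, mul_pow, h2]
  calc (-1) ^ q * Real.exp (x ^ 2) * (√2 ^ q * ((-1) ^ q * aeval (√2 * x) (hermite q) *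
        Real.exp (-(2 * x ^ 2 / 2))))
      = ((-1) ^ q * (-1) ^ q) * (Real.exp (x ^ 2) * Real.exp (-x ^ 2)) *
          (√2 ^ q * aeval (√2 * x) (hermite q)) := by ring_nf
    _ = √2 ^ q * aeval (√2 * x) (hermite q) := by
        rw [← Real.exp_add, ← mul_pow]
        norm_num

noncomputable def hermiteReflSq (q : ℕ) : ℝ[X] :=
  ((hermite q).map (Int.castRingHom ℝ)).comp (C (-√2) * X) ^ 2

lemma hermiteH_neg_sq (q : ℕ) (t : ℝ) :
    hermiteH q (-t) ^ 2 = 2 ^ q * (hermiteReflSq q).eval t := by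
  rw [hermiteH_eq_aeval, hermiteReflSq, eval_pow, eval_comp, eval_mul, eval_C, eval_X, eval_map,
    ← algebraMap_int_eq, ← aeval_def, mul_pow, ← pow_mul, mul_comm q 2, pow_mul,
    Real.sq_sqrt zero_le_two, neg_mul, mul_neg]

lemma natDegree_hermite_map (q : ℕ) : ((hermite q).map (Int.castRingHom ℝ)).natDegree = q := by
  rw [(hermite_monic q).natDegree_map, natDegree_hermite]

lemma natDegree_hermiteReflSq (q : ℕ) : (hermiteReflSq q).natDegree = 2 * q := by
  have : -√2 ≠ 0 := by simp
  rw [hermiteReflSq, natDegree_pow, natDegree_comp, natDegree_C_mul_X _ this,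
    natDegree_hermite_map, mul_one, mul_comm]

lemma leadingCoeff_hermiteReflSq (q : ℕ) : (hermiteReflSq q).leadingCoeff = 2 ^ q := by
  have : -√2 ≠ 0 := by simp
  rw [hermiteReflSq, leadingCoeff_pow,
    leadingCoeff_comp (by rw [natDegree_C_mul_X _ this]; exact one_ne_zero),
    ((hermite_monic q).map _).leadingCoeff, leadingCoeff_C_mul_X, natDegree_hermite_map, one_mul,
    ← pow_mul, mul_comm q 2, pow_mul, neg_sq, Real.sq_sqrt zero_le_two]

lemma hermiteReflSq_ne_zero (q : ℕ) : hermiteReflSq q ≠ 0 := by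
  rw [← leadingCoeff_ne_zero, leadingCoeff_hermiteReflSq]
  positivity

lemma hermFun_neg_sq (j : ℕ) (t : ℝ) :
    hermFun j (-t) ^ 2 =
      (hermiteReflSq (j - 1)).eval t * Real.exp (-t ^ 2) / (√Real.pi * (j - 1).factorial) := by
  have hexp : Real.exp (-(-t) ^ 2 / 2) ^ 2 = Real.exp (-t ^ 2) := by
    rw [← Real.exp_nat_mul]
    ring_nf
  have : (0 : ℝ) < (j - 1).factorial := by exact_mod_cast (j - 1).factorial_pos
  rw [hermFun, div_pow, mul_pow, Real.sq_sqrt (by positivity), hexp, hermiteH_neg_sq]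
  field_simp

lemma Phi_step_sq {b : ℝ} (hb : 0 < b) (j : ℕ) {wm wp : ℝ} (hw : wm ≤ wp) (x₀ k : ℝ) :
    Phi b (fun x => if x₀ ≤ x then wp else wm) wp j k ^ 2 =
      (wp - wm) * ∫ t in Ioi (k / √b - √b * x₀), hermFun j (-t) ^ 2 := by
  have hsb : 0 < √b := Real.sqrt_pos.2 hb
  set K := k / √b - √b * x₀
  set g := (Ioi K).indicator fun t => (wp - wm) * hermFun j (-t) ^ 2
  have hstep : ∀ x, x + k / b < x₀ ↔ K < -√b * x := by
    intro x
    have : √b * (x + k / b) = √b * x + k / √b := by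
      field_simp
      rw [Real.sq_sqrt hb.le]
      ring
    rw [← mul_lt_mul_iff_right₀ hsb, this]
    constructor <;> intro <;> linarith
  have hintegrand : ∀ x, (wp - (if x₀ ≤ x + k / b then wp else wm)) * √b * hermFun j (√b * x) ^ 2
      = √b * g (-√b * x) := by
    intro x
    simp only [g]
    by_cases hx : x₀ ≤ x + k / b
    · have : -√b * x ∉ Ioi K := fun hmem => not_lt.2 hx ((hstep x).2 hmem)
      rw [if_pos hx, Set.indicator_of_notMem this]
      ring
    · have : -√b * x ∈ Ioi K := (hstep x).1 (not_le.1 hx)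
      rw [if_neg hx, Set.indicator_of_mem this, neg_mul, neg_neg]
      ring
  have hnonneg : ∀ x, 0 ≤ (wp - (if x₀ ≤ x + k / b then wp else wm)) * √b *
      hermFun j (√b * x) ^ 2 := by
    intro x
    have : 0 ≤ wp - (if x₀ ≤ x + k / b then wp else wm) := by split_ifs <;> linarith
    positivity
  calc Phi b (fun x => if x₀ ≤ x then wp else wm) wp j k ^ 2
      = ∫ x, √b * g (-√b * x) := by
        rw [Phi, Real.sq_sqrt (integral_nonneg hnonneg)]
        exact integral_congr_ae (Eventually.of_forall hintegrand)
    _ = ∫ t, g t := by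
        rw [integral_const_mul, Measure.integral_comp_mul_left, abs_inv, abs_neg,
          abs_of_pos hsb, smul_eq_mul, ← mul_assoc, mul_inv_cancel₀ hsb.ne', one_mul]
    _ = (wp - wm) * ∫ t in Ioi K, hermFun j (-t) ^ 2 := by
        rw [integral_indicator measurableSet_Ioi, integral_const_mul]

lemma pj_mul_rpow {b : ℝ} (hb : 0 < b) (j : ℕ) {k : ℝ} (hk : 0 ≤ k) :
    pj b j * k ^ (2 * (j : ℝ) - 3) =
      2 ^ (j - 1) / (√Real.pi * (j - 1).factorial) * (k / √b) ^ (2 * (j : ℝ) - 3) := by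
  have hb' : b ^ ((3 : ℝ) / 2 - j) = (√b ^ (2 * (j : ℝ) - 3))⁻¹ := by
    rw [Real.sqrt_eq_rpow, ← Real.rpow_mul hb.le, ← Real.rpow_neg hb.le]
    ring_nf
  rw [pj, Real.div_rpow hk (Real.sqrt_nonneg b), hb']
  ring

/-- For the step edge potential `w`, one has
`Φ_j(k;w)² = ((w₊-w₋)/2) p_j k^{2j-3} e^{-(b^{-1/2}k - b^{1/2}x₀)²} (1 + o(1))` as `k → +∞`. -/
theorem Phi_step_asymptotics (b : ℝ) (hb : 0 < b) (j : ℕ) (hj : 1 ≤ j)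
    (wm wp x₀ : ℝ) (hw : wm < wp) :
    Tendsto (fun k : ℝ =>
        (Phi b (fun x => if x₀ ≤ x then wp else wm) wp j k)^2 /
          (((wp - wm) / 2) * pj b j * k ^ (2 * (j:ℝ) - 3) *
            Real.exp (-(k / Real.sqrt b - Real.sqrt b * x₀)^2)))
      atTop (nhds 1) := by
  have hsb : 0 < √b := Real.sqrt_pos.2 hb
  set r : ℝ := 2 * (j : ℝ) - 3
  set K : ℝ → ℝ := fun k => k / √b - √b * x₀
  set c : ℝ := (wp - wm) / (√Real.pi * (j - 1).factorial)
  have hr : ((2 * (j - 1) : ℕ) : ℝ) - 1 = r := by push_cast [Nat.cast_sub hj]; ring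
  have hK : K ~[atTop] fun k => k / √b :=
    IsEquivalent.refl.add_const_of_norm_tendsto_atTop
      (tendsto_norm_atTop_atTop.comp (tendsto_id.atTop_div_const hsb))
  have htail := (integral_Ioi_eval_mul_exp_neg_sq_isEquivalent
    (hermiteReflSq_ne_zero (j - 1))).comp_tendsto
      (hK.symm.tendsto_atTop (tendsto_id.atTop_div_const hsb))
  rw [natDegree_hermiteReflSq, leadingCoeff_hermiteReflSq, hr] at htail
  have hKr : (fun k => K k ^ r) ~[atTop] fun k => (k / √b) ^ r :=
    hK.rpow_of_eventually_nonneg ((eventually_ge_atTop 0).mono fun k hk => by positivity) r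
  have hΦ : (fun k => Phi b (fun x => if x₀ ≤ x then wp else wm) wp j k ^ 2) ~[atTop]
      fun k => c * (2 ^ (j - 1) / 2 * K k ^ r * Real.exp (-K k ^ 2)) := by
    refine (IsEquivalent.refl.mul htail).congr_left (Eventually.of_forall fun k => ?_)
    simp only [Pi.mul_apply, Function.comp_apply, Phi_step_sq hb j hw.le, hermFun_neg_sq,
      integral_div, c, K]
    ring
  refine (isEquivalent_iff_tendsto_one ?_).1 (hΦ.trans ?_)
  · filter_upwards [eventually_gt_atTop 0] with k hk
    have : 0 < pj b j := by unfold pj; positivity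
    have := sub_pos.2 hw
    have := Real.rpow_pos_of_pos hk r
    positivity
  · refine (IsEquivalent.refl.mul
      ((IsEquivalent.refl.mul hKr).mul IsEquivalent.refl)).congr_right ?_
    filter_upwards [eventually_ge_atTop 0] with k hk
    simp only [Pi.mul_apply, c, K]
    rw [mul_assoc _ (pj b j), pj_mul_rpow hb j hk]
    ring
end

section
/- Let b > 0 and let j ≥ 1 be an integer. Then there exist polynomials P_{l,j} for 0 ≤ l ≤ j−1, with deg P_{l,j} ≤ l and P_{0,j} = 1, such that for all x, k ∈ ℝ: ψ_{j,∞}(x;k) = p_j^{1/2} Σ_{l=0}^{j−1} P_{l,j}(x) (−k)^{j−1−l} e^{−(b^{−1/2}k − b^{1/2}x)²/2}. -/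
open MeasureTheory Filter Set

/-- `ψ_{j,∞}(x;k) = b^{1/4} φ_j(b^{1/2} x - b^{-1/2} k)`. -/
noncomputable def psiInf (b : ℝ) (j : ℕ) (x k : ℝ) : ℝ :=
  b ^ ((1:ℝ)/4) * hermFun j (Real.sqrt b * x - k / Real.sqrt b)

/-!
The recursion `H_{n+1} = 2x H_n - H_n'` makes `H_n` a polynomial of degree `n` with leading
coefficient `2^n`. Taylor expansion of `H_n(√b x - k/√b)` at `√b x` in powers of `-k/√b` gives
`∑_l H_n^{[n-l]}(√b x) (-k/√b)^{n-l}`, where the Hasse derivative `H_n^{[n-l]}` has degree at most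
`l` and `H_n^{[n]} = 2^n` is constant. Distributing `√b^n = √b^l √b^{n-l}` and the normalising
constants, which combine into `√p_{n+1}`, yields the polynomials `P_l` with `P_0 = 1`.
-/

open Polynomial

noncomputable def physHermite : ℕ → ℝ[X]
  | 0 => 1
  | n + 1 => C 2 * X * physHermite n - derivative (physHermite n)

theorem iteratedDeriv_exp_neg_sq (n : ℕ) :
    iteratedDeriv n (fun y => Real.exp (-(y ^ 2))) =
      fun x => (-1) ^ n * ((physHermite n).eval x * Real.exp (-(x ^ 2))) := by
  induction n with
  | zero => funext x; simp [physHermite]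
  | succ n ih =>
    funext x
    have hgauss : HasDerivAt (fun y => Real.exp (-(y ^ 2))) (Real.exp (-(x ^ 2)) * -(2 * x)) x := by
      simpa using (hasDerivAt_pow 2 x).neg.exp
    have hstep : HasDerivAt (fun y => (-1) ^ n * ((physHermite n).eval y * Real.exp (-(y ^ 2))))
        ((-1) ^ n * ((derivative (physHermite n)).eval x * Real.exp (-(x ^ 2)) +
          (physHermite n).eval x * (Real.exp (-(x ^ 2)) * -(2 * x)))) x :=
      (((physHermite n).hasDerivAt x).mul hgauss).const_mul _
    rw [iteratedDeriv_succ, ih, hstep.deriv]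
    simp only [physHermite, eval_sub, eval_mul, eval_C, eval_X, pow_succ]
    ring

theorem hermiteH_eq_eval_physHermite (n : ℕ) (x : ℝ) : hermiteH n x = (physHermite n).eval x := by
  rw [hermiteH, iteratedDeriv_exp_neg_sq]
  have hexp : Real.exp (x ^ 2) * Real.exp (-(x ^ 2)) = 1 := by
    rw [← Real.exp_add, add_neg_cancel, Real.exp_zero]
  have hsign : (-1 : ℝ) ^ n * (-1) ^ n = 1 := by rw [← mul_pow]; norm_num
  linear_combination ((physHermite n).eval x * (-1) ^ n * (-1) ^ n) * hexp +
    (physHermite n).eval x * hsign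

theorem natDegree_physHermite_le (n : ℕ) : (physHermite n).natDegree ≤ n := by
  induction n with
  | zero => simp [physHermite]
  | succ n ih =>
    refine (natDegree_sub_le _ _).trans (max_le ?_ ?_)
    · refine natDegree_mul_le.trans ?_
      rw [natDegree_C_mul_X 2 two_ne_zero]
      omega
    · exact (natDegree_derivative_le _).trans (by omega)

theorem coeff_physHermite_self (n : ℕ) : (physHermite n).coeff n = 2 ^ n := by
  induction n with
  | zero => simp [physHermite]
  | succ n ih =>
    have htop : (derivative (physHermite n)).coeff (n + 1) = 0 :=
      coeff_eq_zero_of_natDegree_lt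
        ((natDegree_derivative_le _).trans_lt (by have := natDegree_physHermite_le n; omega))
    rw [physHermite, coeff_sub, mul_assoc, coeff_C_mul, coeff_X_mul, htop, ih, pow_succ]
    ring

theorem natDegree_physHermite (n : ℕ) : (physHermite n).natDegree = n :=
  (natDegree_physHermite_le n).antisymm
    (le_natDegree_of_ne_zero (by rw [coeff_physHermite_self]; positivity))

theorem hasseDeriv_physHermite_self (n : ℕ) : hasseDeriv n (physHermite n) = C (2 ^ n) := by
  have := hasseDeriv_natDegree_eq_C (f := physHermite n)
  rwa [leadingCoeff, natDegree_physHermite, coeff_physHermite_self] at this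

theorem eval_add_eq_sum_hasseDeriv {R : Type*} [CommSemiring R] {p : R[X]} {n : ℕ}
    (hp : p.natDegree ≤ n) (a t : R) :
    p.eval (a + t) = ∑ l ∈ Finset.range (n + 1), (hasseDeriv (n - l) p).eval a * t ^ (n - l) := by
  rw [add_comm, ← taylor_eval, eval_eq_sum_range' (n := n + 1) (by rw [natDegree_taylor]; omega),
    ← Finset.sum_range_reflect]
  simp only [taylor_coeff, Nat.add_sub_cancel]

theorem sqrt_pj_succ_mul (b : ℝ) (hb : 0 < b) (n : ℕ) :
    Real.sqrt (pj b (n + 1)) * (Real.sqrt b ^ n / 2 ^ n) =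
      b ^ ((1 : ℝ) / 4) / Real.sqrt (Real.sqrt Real.pi * 2 ^ n * n.factorial) := by
  have hpj : pj b (n + 1) =
      2 ^ n * (b ^ ((1 : ℝ) / 2) / b ^ n) / (Real.sqrt Real.pi * n.factorial) := by
    rw [pj, Nat.add_sub_cancel, ← Real.rpow_natCast b n, ← Real.rpow_sub hb]
    push_cast
    ring_nf
  rw [← pow_left_inj₀ (by positivity) (by positivity) two_ne_zero, mul_pow, div_pow, div_pow,
    Real.sq_sqrt (by rw [pj]; positivity), Real.sq_sqrt (by positivity), ← pow_mul, mul_comm n,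
    pow_mul, Real.sq_sqrt hb.le, ← Real.rpow_natCast (b ^ _) 2, ← Real.rpow_mul hb.le, hpj]
  field_simp
  norm_num

theorem psiInf_succ_eq (b : ℝ) (hb : 0 < b) (n : ℕ) (x k : ℝ) :
    psiInf b (n + 1) x k = Real.sqrt (pj b (n + 1)) * (Real.sqrt b ^ n / 2 ^ n) *
      (physHermite n).eval (Real.sqrt b * x + -(k / Real.sqrt b)) *
        Real.exp (-(k / Real.sqrt b - Real.sqrt b * x) ^ 2 / 2) := by
  rw [sqrt_pj_succ_mul b hb, psiInf, hermFun, Nat.add_sub_cancel, hermiteH_eq_eval_physHermite,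
    ← sub_eq_add_neg, ← neg_sub, neg_sq]
  ring

noncomputable def psiInfCoeffPoly (b : ℝ) (n l : ℕ) : ℝ[X] :=
  C (Real.sqrt b ^ l / 2 ^ n) * (hasseDeriv (n - l) (physHermite n)).comp (C (Real.sqrt b) * X)

theorem natDegree_psiInfCoeffPoly_le (b : ℝ) (n l : ℕ) : (psiInfCoeffPoly b n l).natDegree ≤ l := by
  refine (natDegree_C_mul_le _ _).trans (natDegree_comp_le.trans ?_)
  have hderiv : (hasseDeriv (n - l) (physHermite n)).natDegree ≤ l :=
    (natDegree_hasseDeriv_le _ _).trans (by rw [natDegree_physHermite]; omega)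
  simpa using Nat.mul_le_mul hderiv ((natDegree_C_mul_le _ _).trans natDegree_X_le)

theorem psiInfCoeffPoly_zero (b : ℝ) (n : ℕ) : psiInfCoeffPoly b n 0 = 1 := by
  rw [psiInfCoeffPoly, Nat.sub_zero, hasseDeriv_physHermite_self, C_comp, ← C_mul, pow_zero,
    one_div, inv_mul_cancel₀ (by positivity), C_1]

/-- Expansion of `ψ_{j,∞}`: there are polynomials `P_{l,j}`, `deg P_{l,j} ≤ l`, `P_{0,j} = 1`,
with `ψ_{j,∞}(x;k) = p_j^{1/2} ∑_{l=0}^{j-1} P_{l,j}(x) (-k)^{j-1-l} e^{-(b^{-1/2}k - b^{1/2}x)²/2}`. -/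
theorem psiInf_expansion (b : ℝ) (hb : 0 < b) (j : ℕ) (hj : 1 ≤ j) :
    ∃ P : ℕ → Polynomial ℝ,
      (∀ l, l ≤ j - 1 → (P l).degree ≤ (l : ℕ)) ∧ P 0 = 1 ∧
      ∀ x k : ℝ, psiInf b j x k =
        Real.sqrt (pj b j) * ∑ l ∈ Finset.range j,
          (P l).eval x * (-k)^(j-1-l) *
            Real.exp (-(k / Real.sqrt b - Real.sqrt b * x)^2 / 2) := by
  obtain ⟨n, rfl⟩ := Nat.exists_eq_add_of_le' hj
  refine ⟨psiInfCoeffPoly b n, fun l _ => natDegree_le_iff_degree_le.mp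
    (natDegree_psiInfCoeffPoly_le b n l), psiInfCoeffPoly_zero b n, fun x k => ?_⟩
  rw [psiInf_succ_eq b hb, eval_add_eq_sum_hasseDeriv (natDegree_physHermite_le n),
    Finset.mul_sum, Finset.sum_mul, Finset.mul_sum]
  refine Finset.sum_congr rfl fun l hl => ?_
  have hpow : Real.sqrt b ^ n * (-(k / Real.sqrt b)) ^ (n - l) =
      Real.sqrt b ^ l * (-k) ^ (n - l) := by
    rw [← Nat.add_sub_cancel' (Finset.mem_range_succ_iff.mp hl), pow_add, Nat.add_sub_cancel_left,
      mul_assoc, ← mul_pow, mul_neg, mul_div_cancel₀ _ (Real.sqrt_pos.mpr hb).ne']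
  simp only [psiInfCoeffPoly, eval_mul, eval_C, eval_comp, eval_X, Nat.add_sub_cancel]
  linear_combination (Real.sqrt (pj b (n + 1)) / 2 ^ n *
    (hasseDeriv (n - l) (physHermite n)).eval (Real.sqrt b * x) *
      Real.exp (-(k / Real.sqrt b - Real.sqrt b * x) ^ 2 / 2)) * hpow
end

section
/- Let R > 0, m > 0 and k, k' ∈ ℝ. Then ∫_{B_R(0)} e^{m(zk + z̄k')} dμ(z) = π R² Σ_{q=0}^∞ (m² R² k k')^q / ((q!)² (q+1)), where B_R(0) ⊂ ℂ is the open disk of radius R centered at 0, z̄ denotes complex conjugation, and μ is the Lebesgue (area) measure on ℂ ≅ ℝ². -/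
/-!
Write `exp (a z + b z̄) = exp (a z) · exp (b z̄)` as the double series
`∑_{j,l} (a z)^j / j! · (b z̄)^l / l!`, which is dominated on the disk by the convergent
`∑_{j,l} (|a| R)^j / j! · (|b| R)^l / l!`, so it may be integrated term by term.
In polar coordinates `z^j z̄^l = r^(j+l) e^{i(j-l)θ}`, so the angular integral kills every
term with `j ≠ l`, while the diagonal terms give `(ab)^q / (q!)² · π R^(2q+2) / (q+1)`.
-/

open MeasureTheory Set
open scoped Real Nat ComplexConjugate

lemma setIntegral_Ioo_neg_pi_pi_exp_int_mul_I (n : ℤ) :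
    ∫ θ in Ioo (-π) π, Complex.exp (n * θ * Complex.I) = if n = 0 then 2 * π else 0 := by
  rw [← integral_Ioc_eq_integral_Ioo,
    ← intervalIntegral.integral_of_le (by linarith [Real.pi_pos])]
  split_ifs with hn
  · simp only [hn, Int.cast_zero, zero_mul, Complex.exp_zero, intervalIntegral.integral_const,
      Complex.real_smul, mul_one]
    push_cast
    ring
  · have hn' : (n : ℝ) ≠ 0 := by exact_mod_cast hn
    simp only [← Complex.ofReal_intCast, ← Complex.ofReal_mul]
    rw [intervalIntegral.integral_comp_mul_left (fun t : ℝ => Complex.exp (t * Complex.I)) hn',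
      ← neg_mul_eq_mul_neg, integral_exp_mul_I_eq_sin, Real.sin_int_mul_pi]
    simp

lemma polarCoord_symm_pow_mul_conj_pow (j l : ℕ) (p : ℝ × ℝ) :
    Complex.polarCoord.symm p ^ j * conj (Complex.polarCoord.symm p) ^ l =
      p.1 ^ (j + l) * Complex.exp (((j - l : ℤ) : ℂ) * p.2 * Complex.I) := by
  have hconj : conj (Complex.exp (p.2 * Complex.I)) = Complex.exp (-p.2 * Complex.I) := by
    rw [← Complex.exp_conj]
    simp
  rw [Complex.polarCoord_symm_apply, Complex.ofReal_cos, Complex.ofReal_sin, ← Complex.exp_mul_I,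
    map_mul, Complex.conj_ofReal, hconj, mul_pow, mul_pow, ← Complex.exp_nat_mul,
    ← Complex.exp_nat_mul, pow_add, mul_mul_mul_comm, ← Complex.exp_add]
  push_cast
  ring_nf

lemma setIntegral_ball_zero_eq_setIntegral_polarCoord {E : Type*} [NormedAddCommGroup E]
    [NormedSpace ℝ E] (f : ℂ → E) (R : ℝ) :
    ∫ z in Metric.ball (0 : ℂ) R, f z =
      ∫ p in Ioo 0 R ×ˢ Ioo (-π) π, p.1 • f (Complex.polarCoord.symm p) := by
  classical
  rw [← integral_indicator measurableSet_ball, ← Complex.integral_comp_polarCoord_symm,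
    polarCoord_target, ← integral_indicator (measurableSet_Ioi.prod measurableSet_Ioo),
    ← integral_indicator (measurableSet_Ioo.prod measurableSet_Ioo)]
  congr 1 with ⟨r, θ⟩
  have hball : Complex.polarCoord.symm (r, θ) ∈ Metric.ball 0 R ↔ |r| < R := by simp
  by_cases hr : 0 < r
  · simp only [indicator_apply, mem_prod, mem_Ioi, mem_Ioo, hball, abs_of_pos hr, hr, true_and]
    split_ifs <;> simp_all
  · simp [hr]

lemma setIntegral_Ioo_zero_pow {R : ℝ} (hR : 0 ≤ R) (n : ℕ) :
    ∫ r in Ioo 0 R, r ^ n = R ^ (n + 1) / (n + 1) := by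
  rw [← integral_Ioc_eq_integral_Ioo, ← intervalIntegral.integral_of_le hR, integral_pow]
  simp

lemma setIntegral_ball_zero_pow_mul_conj_pow {R : ℝ} (hR : 0 ≤ R) (j l : ℕ) :
    ∫ z in Metric.ball (0 : ℂ) R, z ^ j * conj z ^ l =
      ((if j = l then π * R ^ (2 * j + 2) / (j + 1) else 0 : ℝ) : ℂ) := by
  have hpolar (p : ℝ × ℝ) :
      p.1 • (Complex.polarCoord.symm p ^ j * conj (Complex.polarCoord.symm p) ^ l) =
        ((p.1 ^ (j + l + 1) : ℝ) : ℂ) * Complex.exp (((j - l : ℤ) : ℂ) * p.2 * Complex.I) := by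
    rw [polarCoord_symm_pow_mul_conj_pow, Complex.real_smul]
    push_cast
    ring
  simp_rw [setIntegral_ball_zero_eq_setIntegral_polarCoord, hpolar]
  rw [Measure.volume_eq_prod, setIntegral_prod_mul (fun r : ℝ => ((r ^ (j + l + 1) : ℝ) : ℂ))
      (fun θ : ℝ => Complex.exp (((j - l : ℤ) : ℂ) * θ * Complex.I)),
    setIntegral_Ioo_neg_pi_pi_exp_int_mul_I, integral_complex_ofReal,
    setIntegral_Ioo_zero_pow hR]
  simp only [sub_eq_zero, Nat.cast_inj]
  split_ifs with h
  · subst h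
    rw [← Complex.ofReal_mul]
    congr 1
    push_cast
    field_simp
    ring
  · simp

lemma Complex.hasSum_pow_div_factorial (x : ℂ) :
    HasSum (fun n : ℕ => x ^ n / n !) (Complex.exp x) := by
  rw [Complex.exp_eq_exp_ℂ]
  exact NormedSpace.expSeries_div_hasSum_exp x

lemma Complex.hasSum_prod_pow_div_factorial (x y : ℂ) :
    HasSum (fun p : ℕ × ℕ => x ^ p.1 / p.1 ! * (y ^ p.2 / p.2 !)) (Complex.exp (x + y)) := by
  have hx : Summable fun n : ℕ => ‖x ^ n / (n ! : ℂ)‖ := NormedSpace.norm_expSeries_div_summable x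
  have hy : Summable fun n : ℕ => ‖y ^ n / (n ! : ℂ)‖ := NormedSpace.norm_expSeries_div_summable y
  rw [Complex.exp_add]
  exact HasSum.mul (f := fun n : ℕ => x ^ n / (n ! : ℂ)) (g := fun n : ℕ => y ^ n / (n ! : ℂ))
    (hasSum_pow_div_factorial x) (hasSum_pow_div_factorial y) (hx.mul_norm hy).of_norm

theorem hasSum_setIntegral_ball_exp_mul_add_mul_conj {R : ℝ} (hR : 0 ≤ R) (a b : ℂ) :
    HasSum (fun q : ℕ => (π : ℂ) * R ^ 2 * (a * b * R ^ 2) ^ q / ((q ! : ℂ) ^ 2 * (q + 1)))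
      (∫ z in Metric.ball (0 : ℂ) R, Complex.exp (a * z + b * conj z)) := by
  let F : ℕ × ℕ → ℂ → ℂ := fun p z => (a * z) ^ p.1 / p.1 ! * ((b * conj z) ^ p.2 / p.2 !)
  have hF (p : ℕ × ℕ) (z : ℂ) :
      F p z = a ^ p.1 / p.1 ! * (b ^ p.2 / p.2 !) * (z ^ p.1 * conj z ^ p.2) := by
    simp only [F, mul_pow]
    ring
  have hbound (p : ℕ × ℕ) : ∀ᵐ z ∂volume.restrict (Metric.ball (0 : ℂ) R),
      ‖F p z‖ ≤ (‖a‖ * R) ^ p.1 / p.1 ! * ((‖b‖ * R) ^ p.2 / p.2 !) := by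
    refine ae_restrict_of_forall_mem measurableSet_ball fun z hz => ?_
    have hz : ‖z‖ ≤ R := (mem_ball_zero_iff.1 hz).le
    simp only [F, norm_mul, norm_div, norm_pow, Complex.norm_natCast, Complex.norm_conj]
    gcongr
  have hsum := hasSum_integral_of_dominated_convergence (F := F)
    (f := fun z => Complex.exp (a * z + b * conj z))
    (fun p _ => (‖a‖ * R) ^ p.1 / p.1 ! * ((‖b‖ * R) ^ p.2 / p.2 !))
    (fun p => (by fun_prop : Continuous (F p)).aestronglyMeasurable) hbound
    (ae_of_all _ fun _ => (Real.summable_pow_div_factorial _).mul_of_nonneg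
      (Real.summable_pow_div_factorial _) (fun _ => by positivity) fun _ => by positivity)
    (integrableOn_const measure_ball_lt_top.ne)
    (ae_of_all _ fun z => Complex.hasSum_prod_pow_div_factorial (a * z) (b * conj z))
  simp only [hF, integral_const_mul, setIntegral_ball_zero_pow_mul_conj_pow hR] at hsum
  rw [← Function.Injective.hasSum_iff (g := fun q : ℕ => (q, q))
    (fun _ _ h => congr_arg Prod.fst h) ?offDiagonal] at hsum
  case offDiagonal =>
    rintro ⟨j, l⟩ hjl
    have hne : j ≠ l := by
      rintro rfl
      exact hjl ⟨j, rfl⟩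
    simp [hne]
  refine hsum.congr_fun fun q => ?_
  simp only [Function.comp_apply, if_true]
  push_cast
  field_simp
  ring

theorem disk_exponential_integral_general (R m k k' : ℝ) (hR : 0 < R) :
    (∫ z in Metric.ball (0:ℂ) R,
        Complex.exp (↑m * (z * ↑k + (starRingEnd ℂ) z * ↑k'))) =
      ((Real.pi * R^2 *
        ∑' q : ℕ, (m^2 * R^2 * k * k')^q / ((q.factorial : ℝ)^2 * (q+1)) : ℝ) : ℂ) := by
  have hexponent (z : ℂ) : (m : ℂ) * (z * k + conj z * k') = m * k * z + m * k' * conj z := by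
    ring
  simp_rw [hexponent]
  rw [← (hasSum_setIntegral_ball_exp_mul_add_mul_conj hR.le (m * k) (m * k')).tsum_eq,
    Complex.ofReal_mul, Complex.ofReal_tsum, ← tsum_mul_left]
  congr 1 with q
  push_cast
  ring

/-- `∫_{B_R(0)} e^{m(zk + z̄k')} dμ(z) = π R² ∑_{q≥0} (m²R²kk')^q / ((q!)²(q+1))`. -/
theorem disk_exponential_integral (R m k k' : ℝ) (hR : 0 < R) (hm : 0 < m) :
    (∫ z in Metric.ball (0:ℂ) R,
        Complex.exp (↑m * (z * ↑k + (starRingEnd ℂ) z * ↑k'))) =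
      ((Real.pi * R^2 *
        ∑' q : ℕ, (m^2 * R^2 * k * k')^q / ((q.factorial : ℝ)^2 * (q+1)) : ℝ) : ℂ) :=
  disk_exponential_integral_general R m k k' hR
end

section
/- Let R > 0, a ≥ 0 and c ∈ ℝ. Then lim_{m→∞} m^{−1} · #{ q ∈ ℤ_{≥0} : ((q+1)/(eRm)) · ln((q+1)/(eRm)) + c/m < a } = eR κ(a), where κ(a) denotes the Lebesgue measure of the set { t > 0 : t ln t < a }. -/
/-!
For `a ≥ 0` the set `{t > 0 : t log t < a}` is the interval `(0, τ)`, where `τ ≥ 1` solves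
`τ log τ = a`; hence `κ(a) = τ`. The integers `q` being counted are those for which the lattice
point `(q + 1) / (e R m)`, of mesh `1 / (e R m)`, lies in `{t > 0 : t log t < a - c / m}`. Given
`β' > τ` and `0 < α ≤ β < τ`, for large `m` this set is contained in `(0, β')` and, by convexity
of `t log t`, contains `[α, β]`. So the count divided by `m` lies between `e R (β - α)` and
`e R β'` up to `O(1 / m)`.
-/

open MeasureTheory Filter Set

noncomputable def kappa (s : ℝ) : ℝ :=
  (volume { t : ℝ | 0 < t ∧ t * Real.log t < s }).toReal

open Real
open scoped Topology

theorem subset_Iio_ceil_of_forall_add_one_div_lt {p : ℕ → Prop} {L β : ℝ} (hL : 0 < L)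
    (h : ∀ q, p q → ((q : ℝ) + 1) / L < β) : {q | p q} ⊆ Iio ⌈L * β⌉₊ := by
  intro q hq
  have : (q : ℝ) + 1 < L * β := (div_lt_iff₀' hL).1 (h q hq)
  exact Nat.lt_ceil.2 (by linarith)

theorem natCard_lt_of_forall_add_one_div_lt {p : ℕ → Prop} {L β : ℝ} (hL : 0 < L) (hβ : 0 ≤ β)
    (h : ∀ q, p q → ((q : ℝ) + 1) / L < β) : (Nat.card {q | p q} : ℝ) < L * β + 1 := by
  have hcard : Nat.card {q | p q} ≤ ⌈L * β⌉₊ := by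
    simpa using Nat.card_mono (finite_Iio _) (subset_Iio_ceil_of_forall_add_one_div_lt hL h)
  calc (Nat.card {q | p q} : ℝ) ≤ ⌈L * β⌉₊ := by exact_mod_cast hcard
    _ < L * β + 1 := Nat.ceil_lt_add_one (by positivity)

theorem lt_natCard_of_forall_mem_Icc {p : ℕ → Prop} (hp : {q | p q}.Finite) {L α β : ℝ}
    (hL : 0 < L) (hα : 0 < α) (h : ∀ q : ℕ, ((q : ℝ) + 1) / L ∈ Icc α β → p q) :
    L * (β - α) - 1 < Nat.card {q | p q} := by
  set n₁ := ⌈L * α⌉₊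
  set n₂ := ⌊L * β⌋₊
  have hn₁ : 1 ≤ n₁ := Nat.one_le_ceil_iff.2 (by positivity)
  have hsub : Ico (n₁ - 1) n₂ ⊆ {q | p q} := by
    rintro q ⟨hq₁, hq₂⟩
    have h₁ : L * α ≤ (q : ℝ) + 1 := by exact_mod_cast Nat.ceil_le.1 (show n₁ ≤ q + 1 by omega)
    have h₂ : (q : ℝ) + 1 ≤ L * β := by exact_mod_cast (Nat.le_floor_iff' q.succ_ne_zero).1 hq₂
    exact h q ⟨(le_div_iff₀' hL).2 h₁, (div_le_iff₀' hL).2 h₂⟩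
  have hcard : n₂ + 1 ≤ Nat.card {q | p q} + n₁ := by
    have := Nat.card_mono hp hsub
    simp only [Nat.card_coe_set_eq, ncard_Ico_nat] at this ⊢
    omega
  have : (n₂ : ℝ) + 1 ≤ Nat.card {q | p q} + n₁ := by exact_mod_cast hcard
  linarith [Nat.lt_floor_add_one (L * β), Nat.ceil_lt_add_one (by positivity : 0 ≤ L * α)]

theorem mul_log_lt_mul_log_iff {t τ : ℝ} (ht : 0 < t) (hτ : 1 ≤ τ) :
    t * log t < τ * log τ ↔ t < τ := by
  have he : exp (-1) < 1 := by rw [exp_lt_one_iff]; norm_num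
  rcases lt_or_ge t (exp (-1)) with hte | hte
  · have : t * log t < 0 := mul_log_neg ht (hte.trans he)
    exact iff_of_true (by linarith [mul_log_nonneg hτ]) (by linarith)
  · exact mul_log_strictMonoOn.lt_iff_lt hte (he.le.trans hτ)

theorem exists_one_le_mul_log_eq {a : ℝ} (ha : 0 ≤ a) : ∃ τ, 1 ≤ τ ∧ τ * log τ = a := by
  have hmem : a ∈ Icc (1 * log 1) (exp a * log (exp a)) := by
    rw [log_one, mul_zero, log_exp]
    exact ⟨ha, le_mul_of_one_le_left ha (one_le_exp ha)⟩
  obtain ⟨τ, hτ, hτa⟩ :=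
    intermediate_value_Icc (one_le_exp ha) continuous_mul_log.continuousOn hmem
  exact ⟨τ, hτ.1, hτa⟩

theorem kappa_mul_log {τ : ℝ} (hτ : 1 ≤ τ) : kappa (τ * log τ) = τ := by
  have : {t : ℝ | 0 < t ∧ t * log t < τ * log τ} = Ioo 0 τ := by
    ext t
    exact and_congr_right fun ht => mul_log_lt_mul_log_iff ht hτ
  rw [kappa, this, volume_Ioo, sub_zero, ENNReal.toReal_ofReal (by linarith)]

theorem eventually_forall_lt_of_mul_log_add_div_lt (c : ℝ) {τ β : ℝ} (hτ : 1 ≤ τ)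
    (hβ : τ < β) :
    ∀ᶠ m : ℝ in atTop, ∀ t, 0 < t → t * log t + c / m < τ * log τ → t < β := by
  have hlt : τ * log τ < β * log β := (mul_log_lt_mul_log_iff (by linarith) (by linarith)).2 hβ
  have hc : Tendsto (fun m : ℝ => c / m) atTop (𝓝 0) := tendsto_const_nhds.div_atTop tendsto_id
  filter_upwards [hc.eventually_const_lt (by linarith : τ * log τ - β * log β < 0)]
    with m hm t ht htm
  exact (mul_log_lt_mul_log_iff ht (by linarith)).1 (by linarith)

theorem eventually_forall_mem_Icc_mul_log_add_div_lt (c : ℝ) {τ α β : ℝ} (hτ : 1 ≤ τ)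
    (hα : 0 < α) (hαβ : α ≤ β) (hβ : β < τ) :
    ∀ᶠ m : ℝ in atTop, ∀ t ∈ Icc α β, t * log t + c / m < τ * log τ := by
  have hmax : max (α * log α) (β * log β) < τ * log τ :=
    max_lt ((mul_log_lt_mul_log_iff hα hτ).2 (by linarith))
      ((mul_log_lt_mul_log_iff (by linarith) hτ).2 hβ)
  have hc : Tendsto (fun m : ℝ => c / m) atTop (𝓝 0) := tendsto_const_nhds.div_atTop tendsto_id
  filter_upwards [hc.eventually_lt_const (sub_pos.2 hmax)] with m hm t ht
  have := convexOn_mul_log.le_max_of_mem_Icc (mem_Ici.2 hα.le) (mem_Ici.2 (by linarith)) ht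
  linarith

theorem eventually_lt_natCard_div {E c τ b : ℝ} (hE : 0 < E) (hτ : 1 ≤ τ) (hb : b < E * τ) :
    ∀ᶠ m : ℝ in atTop, b < (Nat.card {q : ℕ | ((q + 1 : ℝ) / (E * m)) *
      log ((q + 1 : ℝ) / (E * m)) + c / m < τ * log τ} : ℝ) / m := by
  set γ := max (b / E) 0
  have hγτ : γ < τ := max_lt ((div_lt_iff₀ hE).2 (by linarith)) (by linarith)
  obtain ⟨β, hγβ, hβτ⟩ := exists_between hγτ
  obtain ⟨α, hα, hαβ⟩ := exists_between (sub_pos.2 hγβ)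
  have hgap : b < E * (β - α) :=
    (div_lt_iff₀' hE).1 ((le_max_left _ _).trans_lt (by linarith : γ < β - α))
  filter_upwards [eventually_forall_mem_Icc_mul_log_add_div_lt c hτ hα
      (by linarith [le_max_right (b / E) 0]) hβτ,
    eventually_forall_lt_of_mul_log_add_div_lt c hτ (lt_add_one τ), eventually_gt_atTop 0,
    eventually_gt_atTop (1 / (E * (β - α) - b))] with m hIcc hlt hm hm'
  have hEm : 0 < E * m := mul_pos hE hm
  have hfin := (finite_Iio _).subset
    (subset_Iio_ceil_of_forall_add_one_div_lt hEm fun q hq => hlt _ (by positivity) hq)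
  have hcard := lt_natCard_of_forall_mem_Icc hfin hEm hα fun q hq => hIcc _ hq
  have hm₁ : 1 < m * (E * (β - α) - b) := (div_lt_iff₀ (sub_pos.2 hgap)).1 hm'
  rw [lt_div_iff₀ hm]
  nlinarith

theorem eventually_natCard_div_lt {E c τ b : ℝ} (hE : 0 < E) (hτ : 1 ≤ τ) (hb : E * τ < b) :
    ∀ᶠ m : ℝ in atTop, (Nat.card {q : ℕ | ((q + 1 : ℝ) / (E * m)) *
      log ((q + 1 : ℝ) / (E * m)) + c / m < τ * log τ} : ℝ) / m < b := by
  obtain ⟨β, hτβ, hβb⟩ := exists_between ((lt_div_iff₀' hE).2 hb)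
  have hEβ : E * β < b := (lt_div_iff₀' hE).1 hβb
  filter_upwards [eventually_forall_lt_of_mul_log_add_div_lt c hτ hτβ, eventually_gt_atTop 0,
    eventually_gt_atTop (1 / (b - E * β))] with m hlt hm hm'
  have hcard := natCard_lt_of_forall_add_one_div_lt (mul_pos hE hm) (by linarith)
    fun q hq => hlt _ (by positivity) hq
  have hm₁ : 1 < m * (b - E * β) := (div_lt_iff₀ (sub_pos.2 hEβ)).1 hm'
  rw [div_lt_iff₀ hm]
  nlinarith

/-- `lim_{m→∞} m⁻¹ #{q ≥ 0 : ((q+1)/(eRm)) ln((q+1)/(eRm)) + c/m < a} = eR κ(a)`. -/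
theorem counting_limit_kappa (R a c : ℝ) (hR : 0 < R) (ha : 0 ≤ a) :
    Tendsto (fun m : ℝ =>
        (Nat.card { q : ℕ |
          ((q + 1 : ℝ) / (Real.exp 1 * R * m)) *
              Real.log ((q + 1 : ℝ) / (Real.exp 1 * R * m)) + c / m < a } : ℝ) / m)
      atTop (nhds (Real.exp 1 * R * kappa a)) := by
  obtain ⟨τ, hτ, rfl⟩ := exists_one_le_mul_log_eq ha
  have hE : 0 < exp 1 * R := by positivity
  rw [kappa_mul_log hτ]
  exact tendsto_order.2
    ⟨fun _ => eventually_lt_natCard_div hE hτ, fun _ => eventually_natCard_div_lt hE hτ⟩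
end

section
/- Let R > 0, α ≥ 0 and s > 0. Then limsup_{m→∞} m^{−1} · #{ q ∈ ℤ_{≥0} : e^{mα} (mR)^{q+1} / (q! √(q+1)) > √s } ≤ eR κ(α/(eR)), where κ(u) denotes the Lebesgue measure of the set { t > 0 : t ln t < u }. -/
/-!
Write `c = eR` and `u = α / c`. Since `t ↦ t log t` is negative on `(0, 1)` and increasing on
`[1, ∞)`, the set defining `κ(u)` contains `(0, x) \ {1}` whenever `x log x ≤ u`; hence every
`x > κ(u)` satisfies `x log x > u`. By `q^q ≤ e^q q!` the `q`-th term is at most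
`e^{mα} · mR · (emR / q)^q`, and for `q ≥ m c x` the factor `(emR / q)^q = exp(-q log(q / mc))`
is at most `exp(-m c x log x)`. So for `q ≥ m c x` the term is at most `mR · exp(-m (c x log x - α))`,
which tends to `0`, and eventually fewer than `⌈m c x⌉` indices remain: the limsup is at most
`c x` for every `x > κ(u)`.
-/

open MeasureTheory Filter Set Real
open scoped Nat Topology

lemma strictMonoOn_mul_log : StrictMonoOn (fun x : ℝ ↦ x * log x) (Ici 1) := by
  intro x hx y _ hxy
  have hlog : log x ≤ log y := log_le_log (by linarith [mem_Ici.1 hx]) hxy.le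
  have hlog_pos : 0 < log y := log_pos (lt_of_le_of_lt hx hxy)
  have hx0 : 0 ≤ x := zero_le_one.trans hx
  calc x * log x ≤ x * log y := mul_le_mul_of_nonneg_left hlog hx0
    _ < y * log y := mul_lt_mul_of_pos_right hxy hlog_pos

section Kappa

variable {u : ℝ}

lemma setOf_mul_log_lt_subset_Ioo (hu : 0 ≤ u) :
    {t : ℝ | 0 < t ∧ t * log t < u} ⊆ Ioo 0 (exp u + 1) := by
  rintro t ⟨ht0, htu⟩
  refine ⟨ht0, ?_⟩
  rcases le_or_gt t 1 with ht1 | ht1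
  · linarith [one_le_exp hu]
  · have hlog : log t < u := by nlinarith [log_pos ht1]
    linarith [(log_lt_iff_lt_exp ht0).1 hlog]

lemma volume_setOf_mul_log_lt_ne_top (hu : 0 ≤ u) :
    volume {t : ℝ | 0 < t ∧ t * log t < u} ≠ ⊤ :=
  ((measure_mono (setOf_mul_log_lt_subset_Ioo hu)).trans_lt measure_Ioo_lt_top).ne

lemma le_kappa_of_Ioo_diff_subset {x : ℝ} (hu : 0 ≤ u)
    (h : Ioo 0 x \ {1} ⊆ {t : ℝ | 0 < t ∧ t * log t < u}) : x ≤ kappa u := by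
  have hvol : volume (Ioo 0 x \ {1}) = ENNReal.ofReal x := by
    rw [measure_sdiff_null (measure_singleton 1), volume_Ioo, sub_zero]
  rw [kappa, ← ENNReal.ofReal_le_iff_le_toReal (volume_setOf_mul_log_lt_ne_top hu), ← hvol]
  exact measure_mono h

lemma one_le_kappa (hu : 0 ≤ u) : 1 ≤ kappa u :=
  le_kappa_of_Ioo_diff_subset hu fun _ ⟨⟨ht0, ht1⟩, _⟩ ↦ ⟨ht0, (mul_log_neg ht0 ht1).trans_le hu⟩

lemma lt_mul_log_of_kappa_lt {x : ℝ} (hu : 0 ≤ u) (hx : kappa u < x) : u < x * log x := by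
  by_contra! hxu
  refine hx.not_ge (le_kappa_of_Ioo_diff_subset hu ?_)
  rintro t ⟨⟨ht0, htx⟩, ht1⟩
  refine ⟨ht0, ?_⟩
  rcases lt_or_gt_of_ne (mem_singleton_iff.not.1 ht1) with ht | ht
  · exact (mul_log_neg ht0 ht).trans_le hu
  · exact (strictMonoOn_mul_log ht.le (ht.trans htx).le htx).trans_le hxu

end Kappa

lemma pow_succ_div_factorial_mul_sqrt_le {y : ℝ} (hy : 0 ≤ y) (q : ℕ) :
    y ^ (q + 1) / (q ! * √(q + 1)) ≤ y * (exp 1 * y / q) ^ q := by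
  have hsqrt : 1 ≤ √((q : ℝ) + 1) := one_le_sqrt.2 (by linarith [q.cast_nonneg (α := ℝ)])
  have hqq : (q : ℝ) ^ q ≠ 0 := by
    rcases q with _ | q
    · simp
    · positivity
  calc y ^ (q + 1) / (q ! * √(q + 1))
      ≤ y ^ (q + 1) / q ! :=
        div_le_div_of_nonneg_left (by positivity) (by positivity)
          (le_mul_of_one_le_right (by positivity) hsqrt)
    _ = y * ((y / q) ^ q * ((q : ℝ) ^ q / q !)) := by
        rw [div_pow, pow_succ]
        field_simp
    _ ≤ y * ((y / q) ^ q * exp q) := by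
        gcongr
        exact pow_div_factorial_le_exp _ q.cast_nonneg q
    _ = y * (exp 1 * y / q) ^ q := by
        rw [← exp_one_pow, mul_div_assoc, mul_pow, mul_comm (exp 1 ^ q)]

lemma div_pow_le_exp_neg_mul_mul_log {c x : ℝ} {q : ℕ} (hc : 0 < c) (hx : 1 ≤ x)
    (hq : c * x ≤ q) : (c / q) ^ q ≤ exp (-(c * (x * log x))) := by
  have hq0 : (0 : ℝ) < q := lt_of_lt_of_le (by positivity) hq
  have hxt : x ≤ q / c := by rwa [le_div_iff₀' hc]
  have hmono : x * log x ≤ q / c * log (q / c) :=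
    strictMonoOn_mul_log.monotoneOn hx (hx.trans hxt) hxt
  rw [← rpow_natCast, rpow_def_of_pos (by positivity), ← inv_div, log_inv]
  calc exp (-log (q / c) * q) = exp (-(c * (q / c * log (q / c)))) := by
        congr 1
        field_simp
    _ ≤ exp (-(c * (x * log x))) := by gcongr

lemma exp_mul_pow_succ_div_le {m R α x : ℝ} {q : ℕ} (hm : 0 < m) (hR : 0 < R) (hx : 1 ≤ x)
    (hq : m * (exp 1 * R) * x ≤ q) :
    exp (m * α) * (m * R) ^ (q + 1) / (q ! * √(q + 1)) ≤
      m * R * exp (-(m * (exp 1 * R * (x * log x) - α))) := by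
  have hc : exp 1 * (m * R) * x ≤ q := by linarith
  calc exp (m * α) * (m * R) ^ (q + 1) / (q ! * √(q + 1))
      = exp (m * α) * ((m * R) ^ (q + 1) / (q ! * √(q + 1))) := mul_div_assoc _ _ _
    _ ≤ exp (m * α) * (m * R * (exp 1 * (m * R) / q) ^ q) := by
        gcongr
        exact pow_succ_div_factorial_mul_sqrt_le (by positivity) q
    _ ≤ exp (m * α) * (m * R * exp (-(exp 1 * (m * R) * (x * log x)))) := by
        gcongr
        exact div_pow_le_exp_neg_mul_mul_log (by positivity) hx hc
    _ = m * R * exp (-(m * (exp 1 * R * (x * log x) - α))) := by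
        rw [show -(m * (exp 1 * R * (x * log x) - α)) =
            m * α + -(exp 1 * (m * R) * (x * log x)) by ring, exp_add]
        ring

lemma tendsto_mul_mul_exp_neg_mul (R : ℝ) {δ : ℝ} (hδ : 0 < δ) :
    Tendsto (fun m ↦ m * R * exp (-(m * δ))) atTop (𝓝 0) := by
  have h := ((tendsto_pow_mul_exp_neg_atTop_nhds_zero 1).comp
    (tendsto_id.atTop_mul_const hδ)).const_mul (R / δ)
  rw [mul_zero] at h
  refine h.congr fun m ↦ ?_
  simp only [Function.comp_apply, id, pow_one]
  field_simp

lemma limsup_card_div_le {S : ℝ → Set ℕ} {y : ℝ} (hy : 0 ≤ y)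
    (h : ∀ᶠ m in atTop, S m ⊆ Iio ⌈m * y⌉₊) :
    limsup (fun m ↦ (Nat.card (S m) : ℝ) / m) atTop ≤ y := by
  have hlim : Tendsto (fun m : ℝ ↦ y + m⁻¹) atTop (𝓝 y) := by
    simpa using tendsto_const_nhds.add (tendsto_inv_atTop_zero (𝕜 := ℝ))
  have hle : ∀ᶠ m in atTop, (Nat.card (S m) : ℝ) / m ≤ y + m⁻¹ := by
    filter_upwards [h, eventually_gt_atTop 0] with m hm hm0
    have hcard : (Nat.card (S m) : ℝ) ≤ m * y + 1 := by
      have hle : Nat.card (S m) ≤ ⌈m * y⌉₊ := (Nat.card_mono (finite_Iio _) hm).trans_eq (by simp)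
      exact (Nat.cast_le.2 hle).trans (Nat.ceil_lt_add_one (by positivity)).le
    calc (Nat.card (S m) : ℝ) / m ≤ (m * y + 1) / m := by gcongr
      _ = y + m⁻¹ := by field_simp
  have hnonneg : ∀ᶠ m in atTop, 0 ≤ (Nat.card (S m) : ℝ) / m := by
    filter_upwards [eventually_gt_atTop 0] with m hm0
    positivity
  calc limsup (fun m ↦ (Nat.card (S m) : ℝ) / m) atTop
      ≤ limsup (fun m ↦ y + m⁻¹) atTop :=
        limsup_le_limsup hle (isCoboundedUnder_le_of_eventually_le _ hnonneg)
          hlim.isBoundedUnder_le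
    _ = y := hlim.limsup_eq

/-- `limsup_{m→∞} m⁻¹ #{q ≥ 0 : e^{mα}(mR)^{q+1}/(q!√(q+1)) > √s} ≤ eR κ(α/(eR))`. -/
theorem counting_limsup_kappa (R α s : ℝ) (hR : 0 < R) (hα : 0 ≤ α) (hs : 0 < s) :
    limsup (fun m : ℝ =>
        (Nat.card { q : ℕ |
          Real.sqrt s <
            Real.exp (m * α) * (m * R)^(q + 1) /
              ((q.factorial : ℝ) * Real.sqrt (q + 1)) } : ℝ) / m)
      atTop ≤ Real.exp 1 * R * kappa (α / (Real.exp 1 * R)) := by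
  set c := exp 1 * R
  have hc : 0 < c := by positivity
  have hu : 0 ≤ α / c := by positivity
  refine le_of_forall_gt_imp_ge_of_dense fun y hy ↦ ?_
  have hκx : kappa (α / c) < y / c := by rwa [lt_div_iff₀ hc, mul_comm]
  have hx : 1 ≤ y / c := (one_le_kappa hu).trans hκx.le
  have hδ : 0 < c * (y / c * log (y / c)) - α := by
    have := lt_mul_log_of_kappa_lt hu hκx
    rw [div_lt_iff₀' hc] at this
    linarith
  refine limsup_card_div_le ((mul_nonneg hc.le ENNReal.toReal_nonneg).trans hy.le) ?_
  filter_upwards [eventually_gt_atTop 0,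
    (tendsto_mul_mul_exp_neg_mul R hδ).eventually (gt_mem_nhds (sqrt_pos.2 hs))]
    with m hm hsmall q hq
  by_contra! hqy
  refine absurd hq (not_lt.2 ((exp_mul_pow_succ_div_le hm hR hx ?_).trans hsmall.le))
  calc m * c * (y / c) = m * y := by field_simp
    _ ≤ ⌈m * y⌉₊ := Nat.le_ceil _
    _ ≤ q := by exact_mod_cast not_lt.1 hqy
end
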